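/- The sequence of probability measures (μ_N)_{N∈ℕ} satisfies a Large Deviation Principle on M with rate function I_1(p) = h* − h(p), where h* = sup_{p∈M} h(p). -/

import Mathlib

/- Statement 4: the multinomial measures μ_N on M, with μ_N{n/N} ∝ C(N,n), satisfy
an LDP on M with rate function I_1(p) = h* - h(p), where h* = sup_{p∈M} h(p). -/

open MeasureTheory Filter
open scoped Classical BigOperators ENNReal

/-- The set `M = {p ∈ [0,1]^D : ∑ p_k = 1, ∑ k p_k = 2}`. -/
def MSet (D : ℕ) : Set (EuclideanSpace ℝ (Fin D)) :=
  {p | (∀ i, p i ∈ Set.Icc (0 : ℝ) 1) ∧ (∑ i, p i = 1) ∧ (∑ i, ((i.1 : ℝ) + 1) * p i = 2)}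

/-- The grid point `n/N = (n_1/N, …, n_D/N)`. -/
noncomputable def gridPt (D N : ℕ) (n : Fin D → Fin (N + 1)) : EuclideanSpace ℝ (Fin D) :=
  WithLp.toLp 2 (fun i => ((n i : ℕ) : ℝ) / N)

/-- The normalizing constant `Z′_N = ∑_{n : n/N ∈ M} C(N,n)`. -/
noncomputable def Zgrid (D N : ℕ) : ℝ :=
  ∑ n : Fin D → Fin (N + 1),
    if gridPt D N n ∈ MSet D then
      (Nat.multinomial Finset.univ (fun i => (n i : ℕ)) : ℝ)
    else 0

/-- `μ_N`: the probability measure on `M` giving mass `C(N,n)/Z′_N` to each grid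
point `n/N ∈ M`. -/
noncomputable def muN (D N : ℕ) : Measure (MSet D) :=
  ∑ n : Fin D → Fin (N + 1),
    if h : gridPt D N n ∈ MSet D then
      ENNReal.ofReal ((Nat.multinomial Finset.univ (fun i => (n i : ℕ)) : ℝ) / Zgrid D N) •
        Measure.dirac (⟨gridPt D N n, h⟩ : MSet D)
    else 0

/-- The entropy `h(p) = -∑ p_k ln p_k`. -/
noncomputable def entropy (D : ℕ) (p : EuclideanSpace ℝ (Fin D)) : ℝ :=
  -∑ i, p i * Real.log (p i)

/-- A sequence of (probability) measures on a topological space satisfies the Large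
Deviation Principle with the lower semicontinuous nonnegative rate function `I` if
`limsup (1/N) ln μ_N(C) ≤ -inf_C I` for every closed `C` and
`liminf (1/N) ln μ_N(O) ≥ -inf_O I` for every open `O`. -/
def HasLDP {X : Type*} [TopologicalSpace X] [MeasurableSpace X]
    (μ : ℕ → Measure X) (I : X → ℝ) : Prop :=
  LowerSemicontinuous I ∧ (∀ x, 0 ≤ I x) ∧
  (∀ C : Set X, IsClosed C →
    Filter.limsup (fun N : ℕ => (((N : ℝ)⁻¹ : ℝ) : EReal) * ENNReal.log (μ N C)) atTop
      ≤ -sInf ((fun p => ((I p : ℝ) : EReal)) '' C)) ∧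
  (∀ O : Set X, IsOpen O →
    -sInf ((fun p => ((I p : ℝ) : EReal)) '' O)
      ≤ Filter.liminf (fun N : ℕ => (((N : ℝ)⁻¹ : ℝ) : EReal) * ENNReal.log (μ N O)) atTop)

/-
By the method of types, `exp (N h(n/N)) / (N+1)^D ≤ C(N,n) ≤ exp (N h(n/N))`, and there are
at most `(N+1)^D` grid points, so up to polynomial factors
`μ_N(S) ≈ exp (N (max_{S ∩ grid} h - max_{M ∩ grid} h))`.
Since `D ≥ 2`, two free coordinates absorb the rounding errors of the two linear constraints, so
the grid points of `M` approximate every point of `M`; as `h` is continuous on the compact set `M`,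
both LDP bounds follow with rate `h* - h`.
-/

open Finset Real Topology
open scoped Nat

theorem pow_mul_factorial_le_pow_mul_factorial (n k : ℕ) : n ^ k * n ! ≤ n ^ n * k ! := by
  rcases le_total k n with h | h
  · have hdesc := Nat.factorial_mul_descFactorial (Nat.sub_le n k)
    rw [Nat.sub_sub_self h] at hdesc
    calc n ^ k * n ! = n ^ k * (k ! * n.descFactorial (n - k)) := by rw [hdesc]
      _ ≤ n ^ k * (k ! * n ^ (n - k)) := by gcongr; exact Nat.descFactorial_le_pow _ _
      _ = n ^ n * k ! := by rw [mul_left_comm, ← pow_add, Nat.add_sub_cancel' h, mul_comm]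
  · obtain ⟨j, rfl⟩ := Nat.exists_eq_add_of_le h
    calc n ^ (n + j) * n ! = n ^ n * (n ! * n ^ j) := by ring
      _ ≤ n ^ n * (n ! * (n + 1) ^ j) := by gcongr; omega
      _ ≤ n ^ n * (n + j)! := by gcongr; exact Nat.factorial_mul_pow_le_factorial

section MethodOfTypes

variable {ι : Type*} [Fintype ι]

theorem multinomial_mul_prod_pow_le_of_sum_eq {n k : ι → ℕ} (h : ∑ i, k i = ∑ i, n i) :
    Nat.multinomial univ k * ∏ i, n i ^ k i ≤ Nat.multinomial univ n * ∏ i, n i ^ n i := by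
  have hk := Nat.multinomial_spec univ k
  have hn := Nat.multinomial_spec univ n
  rw [h] at hk
  refine Nat.le_of_mul_le_mul_left (c := (∏ i, (k i)!) * ∏ i, (n i)!) ?_ (by positivity)
  calc (∏ i, (k i)!) * (∏ i, (n i)!) * (Nat.multinomial univ k * ∏ i, n i ^ k i)
      = (∑ i, n i)! * ∏ i, (n i ^ k i * (n i)!) := by rw [← hk, prod_mul_distrib]; ring
    _ ≤ (∑ i, n i)! * ∏ i, (n i ^ n i * (k i)!) :=
        Nat.mul_le_mul_left _ (prod_le_prod' fun i _ => pow_mul_factorial_le_pow_mul_factorial _ _)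
    _ = (∏ i, (k i)!) * (∏ i, (n i)!) * (Nat.multinomial univ n * ∏ i, n i ^ n i) := by
        rw [← hn, prod_mul_distrib]; ring

theorem card_piAntidiag_univ_le (N : ℕ) :
    #(piAntidiag (univ : Finset ι) N) ≤ (N + 1) ^ Fintype.card ι := by
  calc #(piAntidiag (univ : Finset ι) N) ≤ #(Fintype.piFinset fun _ : ι => range (N + 1)) := by
        refine card_le_card fun k hk => Fintype.mem_piFinset.mpr fun i => ?_
        rw [mem_range, Nat.lt_succ_iff, ← (mem_piAntidiag.mp hk).1]
        exact single_le_sum (fun j _ => Nat.zero_le (k j)) (mem_univ i)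
    _ = (N + 1) ^ Fintype.card ι := by simp

theorem multinomial_mul_prod_pow_le_one {q : ι → ℝ} (hq : ∀ i, 0 ≤ q i)
    (hq1 : ∑ i, q i = 1) (n : ι → ℕ) :
    (Nat.multinomial univ n : ℝ) * ∏ i, q i ^ n i ≤ 1 := by
  have hexp := sum_pow_eq_sum_piAntidiag univ q (∑ i, n i)
  rw [hq1, one_pow] at hexp
  rw [hexp]
  exact single_le_sum (f := fun k => (Nat.multinomial univ k : ℝ) * ∏ i, q i ^ k i)
    (fun k _ => mul_nonneg (Nat.cast_nonneg _) (prod_nonneg fun i _ => pow_nonneg (hq i) _))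
    (mem_piAntidiag.mpr ⟨rfl, fun i _ => mem_univ i⟩)

/-- The multinomial expansion of `(∑ nᵢ/N)^N = 1` has at most `(N+1)^|ι|` terms, of which the
one indexed by `n` is the largest. -/
theorem one_le_pow_mul_multinomial_mul_prod_pow {N : ℕ} (hN : 0 < N) {n : ι → ℕ}
    (hn : ∑ i, n i = N) :
    1 ≤ ((N : ℝ) + 1) ^ Fintype.card ι *
      ((Nat.multinomial univ n : ℝ) * ∏ i, ((n i : ℝ) / N) ^ n i) := by
  have prod_div_pow : ∀ k : ι → ℕ, ∑ i, k i = N →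
      ∏ i, ((n i : ℝ) / N) ^ k i = (∏ i, (n i : ℝ) ^ k i) / (N : ℝ) ^ N := by
    intro k hk
    simp_rw [div_pow]
    rw [prod_div_distrib, prod_pow_eq_pow_sum, hk]
  have hterm : ∀ k ∈ piAntidiag (univ : Finset ι) N,
      (Nat.multinomial univ k : ℝ) * ∏ i, ((n i : ℝ) / N) ^ k i
        ≤ (Nat.multinomial univ n : ℝ) * ∏ i, ((n i : ℝ) / N) ^ n i := by
    intro k hk
    have hk : ∑ i, k i = N := (mem_piAntidiag.mp hk).1
    rw [prod_div_pow k hk, prod_div_pow n hn, mul_div_assoc', mul_div_assoc']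
    refine div_le_div_of_nonneg_right ?_ (by positivity)
    exact_mod_cast multinomial_mul_prod_pow_le_of_sum_eq (hk.trans hn.symm)
  have hq1 : ∑ i, (n i : ℝ) / N = 1 := by
    rw [← sum_div, div_eq_one_iff_eq (by positivity)]
    exact_mod_cast hn
  calc (1 : ℝ) = ∑ k ∈ piAntidiag univ N,
        (Nat.multinomial univ k : ℝ) * ∏ i, ((n i : ℝ) / N) ^ k i := by
        rw [← sum_pow_eq_sum_piAntidiag, hq1, one_pow]
    _ ≤ #(piAntidiag (univ : Finset ι) N) •
        ((Nat.multinomial univ n : ℝ) * ∏ i, ((n i : ℝ) / N) ^ n i) :=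
        sum_le_card_nsmul _ _ _ hterm
    _ ≤ ((N : ℝ) + 1) ^ Fintype.card ι *
        ((Nat.multinomial univ n : ℝ) * ∏ i, ((n i : ℝ) / N) ^ n i) := by
        rw [nsmul_eq_mul]
        gcongr
        exact_mod_cast card_piAntidiag_univ_le N

end MethodOfTypes

theorem abs_le_of_sum_eq_zero_of_sum_mul_eq_zero {d : ℕ} {e : Fin (d + 2) → ℝ}
    (hsum : ∑ i, e i = 0) (hmean : ∑ i, (i.1 : ℝ) * e i = 0)
    (htail : ∀ j : Fin d, |e j.succ.succ| ≤ 1) (i : Fin (d + 2)) :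
    |e i| ≤ ((d : ℝ) + 2) ^ 2 := by
  simp only [Fin.sum_univ_succ, Fin.val_zero, Fin.val_succ, Nat.cast_add, Nat.cast_one,
    Nat.cast_zero, zero_mul, zero_add, one_mul, add_assoc, one_add_one_eq_two,
    Fin.succ_zero_eq_one] at hsum hmean
  set T := ∑ j : Fin d, e j.succ.succ
  set W := ∑ j : Fin d, ((j.1 : ℝ) + 2) * e j.succ.succ
  have hT : |T| ≤ d :=
    (abs_sum_le_sum_abs _ _).trans ((sum_le_sum fun j _ => htail j).trans (by simp))
  have hW : |W| ≤ d * (d + 2) := by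
    calc |W| ≤ ∑ j : Fin d, |((j.1 : ℝ) + 2) * e j.succ.succ| := abs_sum_le_sum_abs _ _
      _ ≤ ∑ _j : Fin d, ((d : ℝ) + 2) * 1 := by
          refine sum_le_sum fun j _ => ?_
          rw [abs_mul, abs_of_pos (by positivity : (0 : ℝ) < j.1 + 2)]
          gcongr
          · exact_mod_cast j.2.le
          · exact htail j
      _ = d * (d + 2) := by simp; ring
  refine Fin.cases ?_ (Fin.cases ?_ fun j => ?_) i
  · rw [show e 0 = W - T by linarith]
    exact (abs_sub _ _).trans (by nlinarith)
  · rw [Fin.succ_zero_eq_one, show e 1 = -W by linarith, abs_neg]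
    nlinarith
  · exact (htail j).trans (by nlinarith)

/-- Round down all but the first two coordinates and solve the two linear constraints for the
first two. -/
theorem exists_nat_approx_of_sum_eq {d N : ℕ} {x : Fin (d + 2) → ℝ} (hx : ∀ i, 0 ≤ x i)
    (hsum : ∑ i, x i = N) (hmean : ∑ i, (i.1 : ℝ) * x i = N) :
    ∃ n : Fin (d + 2) → ℕ, ∑ i, n i = N ∧ ∑ i, i.1 * n i = N ∧
      ∀ i, |(n i : ℝ) - x i| ≤ ((d : ℝ) + 2) ^ 2 := by
  set r : Fin d → ℕ := fun j => ⌊x j.succ.succ⌋₊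
  have hr_le : ∀ j, (r j : ℝ) ≤ x j.succ.succ := fun j => Nat.floor_le (hx _)
  have hr_gt : ∀ j, x j.succ.succ < r j + 1 := fun j => Nat.lt_floor_add_one _
  have hmean_r : ∑ j, (j.1 + 2) * r j ≤ N := by
    have hmean_tail := hmean
    simp only [Fin.sum_univ_succ, Fin.val_zero, Fin.val_succ, Nat.cast_add, Nat.cast_one,
      Nat.cast_zero, zero_mul, zero_add, one_mul, add_assoc, one_add_one_eq_two] at hmean_tail
    have : ∑ j, ((j.1 : ℝ) + 2) * r j ≤ N := by
      rw [← hmean_tail]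
      exact le_add_of_nonneg_of_le (hx _)
        (sum_le_sum fun j _ => mul_le_mul_of_nonneg_left (hr_le j) (by positivity))
    exact_mod_cast this
  have hsum_r : ∑ j, r j ≤ ∑ j, (j.1 + 2) * r j :=
    sum_le_sum fun j _ => Nat.le_mul_of_pos_left _ (by omega)
  set c₁ := N - ∑ j, (j.1 + 2) * r j
  set n : Fin (d + 2) → ℕ := Fin.cons (N - c₁ - ∑ j, r j) (Fin.cons c₁ r)
  have hn_sum : ∑ i, n i = N := by
    simp only [n, Fin.sum_univ_succ, Fin.cons_zero, Fin.cons_succ]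
    omega
  have hn_mean : ∑ i, i.1 * n i = N := by
    simp only [n, Fin.sum_univ_succ, Fin.cons_zero, Fin.cons_succ, Fin.val_zero, Fin.val_succ,
      add_assoc, one_add_one_eq_two]
    omega
  refine ⟨n, hn_sum, hn_mean,
    abs_le_of_sum_eq_zero_of_sum_mul_eq_zero (e := fun i => (n i : ℝ) - x i) ?_ ?_ fun j => ?_⟩
  · rw [sum_sub_distrib, hsum, sub_eq_zero]
    exact_mod_cast hn_sum
  · simp_rw [mul_sub]
    rw [sum_sub_distrib, hmean, sub_eq_zero]
    exact_mod_cast hn_mean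
  · simp only [n, Fin.cons_succ]
    rw [abs_le]
    constructor <;> linarith [hr_le j, hr_gt j]

section GridApproximation

variable {D : ℕ}

theorem continuous_entropy (D : ℕ) : Continuous (entropy D) :=
  (continuous_finsetSum _ fun i _ =>
    continuous_mul_log.comp ((continuous_apply i).comp (PiLp.continuous_ofLp 2 _))).neg

theorem isCompact_MSet (D : ℕ) : IsCompact (MSet D) := by
  have hcoord : ∀ i : Fin D, Continuous fun p : EuclideanSpace ℝ (Fin D) => p i :=
    fun i => (EuclideanSpace.proj i).continuous
  refine Metric.isCompact_of_isClosed_isBounded ?_ ?_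
  · refine IsClosed.inter ?_ (IsClosed.inter ?_ ?_)
    · show IsClosed {p : EuclideanSpace ℝ (Fin D) | ∀ i, p i ∈ Set.Icc (0 : ℝ) 1}
      rw [Set.ofPred_forall]
      exact isClosed_iInter fun i => isClosed_Icc.preimage (hcoord i)
    · exact isClosed_eq (continuous_finsetSum _ fun i _ => hcoord i) continuous_const
    · exact isClosed_eq (continuous_finsetSum _ fun i _ => continuous_const.mul (hcoord i))
        continuous_const
  · refine (Metric.isBounded_closedBall (x := 0) (r := 1)).subset fun p hp => ?_
    have hsq : ‖p‖ ^ 2 ≤ 1 := by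
      rw [EuclideanSpace.real_norm_sq_eq, ← hp.2.1]
      exact sum_le_sum fun i _ => by
        simpa [sq] using mul_le_mul_of_nonneg_left (hp.1 i).2 (hp.1 i).1
    simpa using (sq_le_one_iff₀ (norm_nonneg p)).mp hsq

theorem entropy_le_sSup {q : EuclideanSpace ℝ (Fin D)} (hq : q ∈ MSet D) :
    entropy D q ≤ sSup (entropy D '' MSet D) :=
  le_csSup ((isCompact_MSet D).image (continuous_entropy D)).bddAbove ⟨q, hq, rfl⟩

theorem sum_mul_eq_one_of_mem_MSet {p : EuclideanSpace ℝ (Fin D)} (hp : p ∈ MSet D) :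
    ∑ i, (i.1 : ℝ) * p i = 1 := by
  have h := hp.2.2
  simp only [add_mul, one_mul, sum_add_distrib, hp.2.1] at h
  linarith

theorem sum_eq_of_gridPt_mem_MSet {N : ℕ} (hN : 0 < N) {n : Fin D → Fin (N + 1)}
    (h : gridPt D N n ∈ MSet D) : ∑ i, (n i : ℕ) = N := by
  have hsum : ∑ i, ((n i : ℕ) : ℝ) / N = 1 := h.2.1
  rw [← sum_div, div_eq_one_iff_eq (by positivity)] at hsum
  exact_mod_cast hsum

theorem gridPt_mem_MSet {N : ℕ} (hN : 0 < N) {n : Fin D → Fin (N + 1)}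
    (hsum : ∑ i, (n i : ℕ) = N) (hmean : ∑ i, i.1 * (n i : ℕ) = N) :
    gridPt D N n ∈ MSet D := by
  have hN' : (N : ℝ) ≠ 0 := by positivity
  have hsum' : ∑ i, ((n i : ℕ) : ℝ) = N := by exact_mod_cast hsum
  have hmean' : ∑ i, (i.1 : ℝ) * (n i : ℕ) = N := by exact_mod_cast hmean
  refine ⟨fun i => ⟨div_nonneg (Nat.cast_nonneg _) (Nat.cast_nonneg _), ?_⟩, ?_, ?_⟩
  · rw [gridPt, PiLp.toLp_apply, div_le_one (by positivity)]
    exact_mod_cast (n i).is_le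
  · simp only [gridPt, PiLp.toLp_apply, ← sum_div, hsum', div_self hN']
  · simp only [gridPt, PiLp.toLp_apply, add_mul, one_mul, sum_add_distrib, mul_div_assoc',
      ← sum_div, hsum', hmean']
    field_simp
    ring

theorem exists_gridPt_tendsto (hD : 2 ≤ D) {p : EuclideanSpace ℝ (Fin D)} (hp : p ∈ MSet D) :
    ∃ n : (N : ℕ) → Fin D → Fin (N + 1), (∀ N, 0 < N → gridPt D N (n N) ∈ MSet D) ∧
      Tendsto (fun N => gridPt D N (n N)) atTop (𝓝 p) := by
  obtain ⟨d, rfl⟩ := Nat.exists_eq_add_of_le' hD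
  have happrox := fun N : ℕ => exists_nat_approx_of_sum_eq (x := fun i => N * p i)
    (fun i => mul_nonneg N.cast_nonneg (hp.1 i).1)
    (by rw [← mul_sum, hp.2.1, mul_one])
    (by simp_rw [mul_left_comm _ (N : ℝ)]
        rw [← mul_sum, sum_mul_eq_one_of_mem_MSet hp, mul_one])
  choose m hm_sum hm_mean hm_near using happrox
  have hm_le : ∀ N i, m N i ≤ N := fun N i =>
    (single_le_sum (fun j _ => Nat.zero_le (m N j)) (mem_univ i)).trans_eq (hm_sum N)
  refine ⟨fun N i => ⟨m N i, Nat.lt_succ_of_le (hm_le N i)⟩,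
    fun N hN => gridPt_mem_MSet hN (hm_sum N) (hm_mean N), ?_⟩
  refine ((PiLp.continuous_toLp 2 _).tendsto p.ofLp).comp (tendsto_pi_nhds.mpr fun i => ?_)
  refine tendsto_iff_dist_tendsto_zero.mpr <| squeeze_zero' (.of_forall fun N => dist_nonneg) ?_
    (tendsto_const_div_atTop_nhds_zero_nat (((d : ℝ) + 2) ^ 2))
  filter_upwards [eventually_gt_atTop 0] with N hN
  have hN' : (0 : ℝ) < N := Nat.cast_pos.mpr hN
  rw [Real.dist_eq, div_sub' hN'.ne', abs_div, abs_of_pos hN']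
  gcongr
  exact hm_near N i

end GridApproximation

section GridWeight

variable {D N : ℕ}

theorem prod_div_pow_eq_exp_neg_mul_entropy (hN : 0 < N) (n : Fin D → Fin (N + 1)) :
    ∏ i, (((n i : ℕ) : ℝ) / N) ^ (n i : ℕ) = exp (-(N * entropy D (gridPt D N n))) := by
  rw [entropy, mul_neg, neg_neg, mul_sum, exp_sum]
  refine prod_congr rfl fun i _ => ?_
  rcases Nat.eq_zero_or_pos (n i : ℕ) with h | h
  · simp [gridPt, h]
  · rw [gridPt, PiLp.toLp_apply, ← mul_assoc, mul_div_cancel₀ _ (by positivity), exp_nat_mul,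
      exp_log (by positivity)]

theorem multinomial_le_exp_mul_entropy (hN : 0 < N) {n : Fin D → Fin (N + 1)}
    (hn : ∑ i, (n i : ℕ) = N) :
    (Nat.multinomial univ (fun i => (n i : ℕ)) : ℝ) ≤ exp (N * entropy D (gridPt D N n)) := by
  have hq : ∑ i, ((n i : ℕ) : ℝ) / N = 1 := by
    rw [← sum_div, div_eq_one_iff_eq (by positivity)]
    exact_mod_cast hn
  have h := multinomial_mul_prod_pow_le_one (fun i => by positivity) hq (fun i => (n i : ℕ))
  rwa [prod_div_pow_eq_exp_neg_mul_entropy hN, exp_neg, ← div_eq_mul_inv,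
    div_le_one (exp_pos _)] at h

theorem exp_mul_entropy_le_multinomial (hN : 0 < N) {n : Fin D → Fin (N + 1)}
    (hn : ∑ i, (n i : ℕ) = N) :
    exp (N * entropy D (gridPt D N n)) ≤
      ((N : ℝ) + 1) ^ D * (Nat.multinomial univ (fun i => (n i : ℕ)) : ℝ) := by
  have h := one_le_pow_mul_multinomial_mul_prod_pow hN hn
  rwa [Fintype.card_fin, prod_div_pow_eq_exp_neg_mul_entropy hN, exp_neg, ← mul_assoc,
    ← div_eq_mul_inv, one_le_div (exp_pos _)] at h

noncomputable def gridWeight (D N : ℕ) (S : Set (MSet D)) : ℝ :=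
  ∑ n ∈ univ.filter fun n : Fin D → Fin (N + 1) =>
      ∃ h : gridPt D N n ∈ MSet D, (⟨gridPt D N n, h⟩ : MSet D) ∈ S,
    (Nat.multinomial univ (fun i => (n i : ℕ)) : ℝ)

theorem gridWeight_univ : gridWeight D N Set.univ = Zgrid D N := by
  simp [gridWeight, Zgrid, sum_filter]

theorem gridWeight_nonneg (S : Set (MSet D)) : 0 ≤ gridWeight D N S :=
  sum_nonneg fun n _ => by positivity

theorem muN_apply {S : Set (MSet D)} (hS : MeasurableSet S) :
    muN D N S = ENNReal.ofReal (gridWeight D N S / Zgrid D N) := by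
  rw [muN, Measure.finsetSum_apply, gridWeight, sum_filter, sum_div,
    ENNReal.ofReal_sum_of_nonneg fun n _ =>
      div_nonneg (by split_ifs <;> positivity) (gridWeight_univ ▸ gridWeight_nonneg _)]
  refine sum_congr rfl fun n _ => ?_
  by_cases hM : gridPt D N n ∈ MSet D
  · by_cases hnS : (⟨gridPt D N n, hM⟩ : MSet D) ∈ S
    · simp [hM, hnS, Measure.dirac_apply' _ hS]
    · simp [hM, hnS, Measure.dirac_apply' _ hS]
  · simp [hM]

theorem gridWeight_le (hN : 0 < N) {S : Set (MSet D)} {t : ℝ}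
    (ht : ∀ x ∈ S, entropy D x ≤ t) :
    gridWeight D N S ≤ ((N : ℝ) + 1) ^ D * exp (N * t) := by
  calc gridWeight D N S ≤ ∑ n ∈ univ.filter fun n : Fin D → Fin (N + 1) =>
          ∃ h : gridPt D N n ∈ MSet D, (⟨gridPt D N n, h⟩ : MSet D) ∈ S, exp (N * t) := by
        refine sum_le_sum fun n hn => ?_
        obtain ⟨hM, hnS⟩ := (mem_filter.mp hn).2
        calc _ ≤ exp (N * entropy D (gridPt D N n)) :=
              multinomial_le_exp_mul_entropy hN (sum_eq_of_gridPt_mem_MSet hN hM)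
          _ ≤ exp (N * t) := by gcongr; exact ht _ hnS
    _ ≤ ∑ _n : Fin D → Fin (N + 1), exp (N * t) :=
        sum_le_sum_of_subset_of_nonneg (filter_subset _ _) fun _ _ _ => (exp_pos _).le
    _ = ((N : ℝ) + 1) ^ D * exp (N * t) := by simp

theorem exp_mul_entropy_le_gridWeight (hN : 0 < N) {S : Set (MSet D)} {n : Fin D → Fin (N + 1)}
    (hM : gridPt D N n ∈ MSet D) (hnS : (⟨gridPt D N n, hM⟩ : MSet D) ∈ S) :
    exp (N * entropy D (gridPt D N n)) ≤ ((N : ℝ) + 1) ^ D * gridWeight D N S := by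
  refine (exp_mul_entropy_le_multinomial hN (sum_eq_of_gridPt_mem_MSet hN hM)).trans ?_
  gcongr
  unfold gridWeight
  exact single_le_sum
    (f := fun k : Fin D → Fin (N + 1) => (Nat.multinomial univ (fun i => (k i : ℕ)) : ℝ))
    (fun k _ => by positivity) (mem_filter.mpr ⟨mem_univ n, hM, hnS⟩)

end GridWeight

section ExponentialScale

variable {N : ℕ}

theorem tendsto_mul_log_add_one_div_atTop (c : ℝ) :
    Tendsto (fun N : ℕ => c * log (N + 1) / N) atTop (𝓝 0) := by
  have h := (tendsto_pow_log_div_mul_add_atTop 1 (-1) 1 one_ne_zero).comp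
    (tendsto_atTop_add_const_right atTop 1 tendsto_natCast_atTop_atTop)
  simpa [Function.comp_def, mul_div_assoc] using h.const_mul c

theorem pow_mul_exp_eq_exp (hN : 0 < N) (k : ℕ) (u : ℝ) :
    ((N : ℝ) + 1) ^ k * exp (N * u) = exp (N * (u + k * log (N + 1) / N)) := by
  rw [mul_add, mul_div_cancel₀ _ (by positivity), exp_add, exp_nat_mul (log _),
    exp_log (by positivity), mul_comm]

theorem inv_mul_log_le_of_le_exp (hN : 0 < N) {a : ℝ≥0∞} {u : ℝ}
    (h : a ≤ ENNReal.ofReal (exp (N * u))) :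
    (((N : ℝ)⁻¹ : ℝ) : EReal) * ENNReal.log a ≤ u := by
  have hlog : ENNReal.log a ≤ ((N * u : ℝ) : EReal) := by
    rw [← log_exp (N * u), ← ENNReal.log_ofReal_of_pos (exp_pos _)]
    exact ENNReal.log_monotone h
  calc (((N : ℝ)⁻¹ : ℝ) : EReal) * ENNReal.log a
      ≤ (((N : ℝ)⁻¹ : ℝ) : EReal) * ((N * u : ℝ) : EReal) :=
        mul_le_mul_of_nonneg_left hlog (EReal.coe_nonneg.mpr (by positivity))
    _ = u := by rw [← EReal.coe_mul, inv_mul_cancel_left₀ (by positivity)]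

theorem le_inv_mul_log_of_exp_le (hN : 0 < N) {a : ℝ≥0∞} {u : ℝ}
    (h : ENNReal.ofReal (exp (N * u)) ≤ a) :
    (u : EReal) ≤ (((N : ℝ)⁻¹ : ℝ) : EReal) * ENNReal.log a := by
  have hlog : ((N * u : ℝ) : EReal) ≤ ENNReal.log a := by
    rw [← log_exp (N * u), ← ENNReal.log_ofReal_of_pos (exp_pos _)]
    exact ENNReal.log_monotone h
  calc (u : EReal) = (((N : ℝ)⁻¹ : ℝ) : EReal) * ((N * u : ℝ) : EReal) := by
        rw [← EReal.coe_mul, inv_mul_cancel_left₀ (by positivity)]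
    _ ≤ (((N : ℝ)⁻¹ : ℝ) : EReal) * ENNReal.log a :=
        mul_le_mul_of_nonneg_left hlog (EReal.coe_nonneg.mpr (by positivity))

theorem limsup_inv_mul_log_le {a : ℕ → ℝ≥0∞} {u : ℕ → ℝ} {L : ℝ} (k : ℕ)
    (h : ∀ᶠ N in atTop, a N ≤ ENNReal.ofReal (((N : ℝ) + 1) ^ k * exp (N * u N)))
    (hu : Tendsto u atTop (𝓝 L)) :
    limsup (fun N : ℕ => (((N : ℝ)⁻¹ : ℝ) : EReal) * ENNReal.log (a N)) atTop ≤ L := by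
  have hu' : Tendsto (fun N : ℕ => u N + k * log (N + 1) / N) atTop (𝓝 L) := by
    simpa using hu.add (tendsto_mul_log_add_one_div_atTop k)
  rw [← (EReal.tendsto_coe.mpr hu').limsup_eq]
  refine limsup_le_limsup ?_
  filter_upwards [h, eventually_gt_atTop 0] with N hle hN
  rw [pow_mul_exp_eq_exp hN] at hle
  exact inv_mul_log_le_of_le_exp hN hle

theorem le_liminf_inv_mul_log {a : ℕ → ℝ≥0∞} {u : ℕ → ℝ} {L : ℝ} (k : ℕ)
    (h : ∀ᶠ N in atTop, ENNReal.ofReal (exp (N * u N) / ((N : ℝ) + 1) ^ k) ≤ a N)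
    (hu : Tendsto u atTop (𝓝 L)) :
    (L : EReal) ≤
      liminf (fun N : ℕ => (((N : ℝ)⁻¹ : ℝ) : EReal) * ENNReal.log (a N)) atTop := by
  have hu' : Tendsto (fun N : ℕ => u N - k * log (N + 1) / N) atTop (𝓝 L) := by
    simpa using hu.sub (tendsto_mul_log_add_one_div_atTop k)
  rw [← (EReal.tendsto_coe.mpr hu').liminf_eq]
  refine liminf_le_liminf ?_
  filter_upwards [h, eventually_gt_atTop 0] with N hle hN
  have hexp : exp (N * u N) / ((N : ℝ) + 1) ^ k = exp (N * (u N - k * log (N + 1) / N)) := by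
    rw [div_eq_iff (by positivity), mul_comm (exp _), pow_mul_exp_eq_exp hN, sub_add_cancel]
  rw [hexp] at hle
  exact le_inv_mul_log_of_exp_le hN hle

end ExponentialScale

section LDP

variable {D N : ℕ}

theorem zgrid_pos (hN : 0 < N) {n : Fin D → Fin (N + 1)} (hM : gridPt D N n ∈ MSet D) :
    0 < Zgrid D N := by
  have h := exp_mul_entropy_le_gridWeight hN hM (Set.mem_univ _)
  rw [gridWeight_univ] at h
  exact pos_of_mul_pos_right ((exp_pos _).trans_le h) (by positivity)

theorem muN_le (hN : 0 < N) {S : Set (MSet D)} (hS : MeasurableSet S) {t : ℝ}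
    (ht : ∀ x ∈ S, entropy D x ≤ t) {n : Fin D → Fin (N + 1)}
    (hM : gridPt D N n ∈ MSet D) :
    muN D N S ≤ ENNReal.ofReal
      (((N : ℝ) + 1) ^ (2 * D) * exp (N * (t - entropy D (gridPt D N n)))) := by
  have hZ := exp_mul_entropy_le_gridWeight hN hM (Set.mem_univ _)
  rw [gridWeight_univ] at hZ
  rw [muN_apply hS]
  refine ENNReal.ofReal_le_ofReal ((div_le_iff₀ (zgrid_pos hN hM)).mpr ?_)
  calc gridWeight D N S ≤ ((N : ℝ) + 1) ^ D * exp (N * t) := gridWeight_le hN ht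
    _ = ((N : ℝ) + 1) ^ D * exp (N * t) / exp (N * entropy D (gridPt D N n)) *
          exp (N * entropy D (gridPt D N n)) := (div_mul_cancel₀ _ (exp_pos _).ne').symm
    _ ≤ ((N : ℝ) + 1) ^ D * exp (N * t) / exp (N * entropy D (gridPt D N n)) *
          (((N : ℝ) + 1) ^ D * Zgrid D N) := by gcongr
    _ = ((N : ℝ) + 1) ^ (2 * D) * exp (N * (t - entropy D (gridPt D N n))) * Zgrid D N := by
        rw [mul_sub, exp_sub, two_mul, pow_add]; ring

theorem le_muN (hN : 0 < N) {S : Set (MSet D)} (hS : MeasurableSet S) {s : ℝ}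
    (hs : ∀ q ∈ MSet D, entropy D q ≤ s) {n : Fin D → Fin (N + 1)}
    (hM : gridPt D N n ∈ MSet D)
    (hnS : (⟨gridPt D N n, hM⟩ : MSet D) ∈ S) :
    ENNReal.ofReal (exp (N * (entropy D (gridPt D N n) - s)) / ((N : ℝ) + 1) ^ (2 * D)) ≤
      muN D N S := by
  have hZ : Zgrid D N ≤ ((N : ℝ) + 1) ^ D * exp (N * s) :=
    gridWeight_univ (D := D) ▸ gridWeight_le hN fun x _ => hs x x.2
  have hW := exp_mul_entropy_le_gridWeight hN hM hnS
  rw [muN_apply hS]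
  refine ENNReal.ofReal_le_ofReal ((le_div_iff₀ (zgrid_pos hN hM)).mpr ?_)
  calc exp (N * (entropy D (gridPt D N n) - s)) / ((N : ℝ) + 1) ^ (2 * D) * Zgrid D N
      ≤ exp (N * (entropy D (gridPt D N n) - s)) / ((N : ℝ) + 1) ^ (2 * D) *
          (((N : ℝ) + 1) ^ D * exp (N * s)) := by gcongr
    _ = exp (N * entropy D (gridPt D N n)) / ((N : ℝ) + 1) ^ D := by
        rw [mul_sub, exp_sub, two_mul, pow_add]; field_simp
    _ ≤ gridWeight D N S := by rwa [div_le_iff₀' (by positivity)]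

theorem limsup_log_muN_le (hD : 2 ≤ D) {C : Set (MSet D)} (hC : IsClosed C) :
    limsup (fun N : ℕ => (((N : ℝ)⁻¹ : ℝ) : EReal) * ENNReal.log (muN D N C)) atTop ≤
      -sInf ((fun p : MSet D => ((sSup (entropy D '' MSet D) - entropy D p : ℝ) : EReal)) '' C) := by
  rcases C.eq_empty_or_nonempty with rfl | hCne
  · simp only [measure_empty, ENNReal.log_zero]
    have hbot : ∀ᶠ N : ℕ in atTop, (((N : ℝ)⁻¹ : ℝ) : EReal) * ⊥ = ⊥ := by
      filter_upwards [eventually_gt_atTop 0] with N hN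
      exact EReal.coe_mul_bot_of_pos (by positivity)
    rw [limsup_congr hbot, limsup_const]
    exact bot_le
  have : CompactSpace (MSet D) := isCompact_iff_compactSpace.mp (isCompact_MSet D)
  obtain ⟨x₀, hx₀C, hx₀max⟩ := hC.isCompact.exists_isMaxOn hCne
    ((continuous_entropy D).comp continuous_subtype_val).continuousOn
  obtain ⟨p, hpM, hp⟩ := ((isCompact_MSet D).image (continuous_entropy D)).sSup_mem
    (Set.Nonempty.image _ ⟨x₀.1, x₀.2⟩)
  obtain ⟨n, hnM, hn⟩ := exists_gridPt_tendsto hD hpM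
  calc limsup (fun N : ℕ => (((N : ℝ)⁻¹ : ℝ) : EReal) * ENNReal.log (muN D N C)) atTop
      ≤ ((entropy D x₀ - sSup (entropy D '' MSet D) : ℝ) : EReal) := by
        refine limsup_inv_mul_log_le (2 * D) ?_
          (tendsto_const_nhds.sub (hp ▸ ((continuous_entropy D).tendsto p).comp hn))
        filter_upwards [eventually_gt_atTop 0] with N hN
        exact muN_le hN hC.measurableSet (fun x hx => hx₀max hx) (hnM N hN)
    _ ≤ _ := by
        rw [EReal.le_neg, ← EReal.coe_neg, neg_sub]
        exact sInf_le ⟨x₀, hx₀C, rfl⟩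

theorem le_liminf_log_muN (hD : 2 ≤ D) {O : Set (MSet D)} (hO : IsOpen O) :
    -sInf ((fun p : MSet D => ((sSup (entropy D '' MSet D) - entropy D p : ℝ) : EReal)) '' O) ≤
      liminf (fun N : ℕ => (((N : ℝ)⁻¹ : ℝ) : EReal) * ENNReal.log (muN D N O)) atTop := by
  rw [EReal.neg_le]
  refine le_sInf ?_
  rintro _ ⟨x, hxO, rfl⟩
  rw [EReal.neg_le, ← EReal.coe_neg, neg_sub]
  obtain ⟨U, hU, rfl⟩ := isOpen_induced_iff.mp hO
  obtain ⟨n, hnM, hn⟩ := exists_gridPt_tendsto hD x.2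
  refine le_liminf_inv_mul_log (2 * D) ?_ ((((continuous_entropy D).tendsto x).comp hn).sub_const _)
  filter_upwards [eventually_gt_atTop 0, hn.eventually_mem (hU.mem_nhds hxO)] with N hN hNU
  exact le_muN hN hO.measurableSet (fun q hq => entropy_le_sSup hq) (hnM N hN) hNU

end LDP

/-- **Sanov-type LDP** for the multinomial measures `μ_N` on `M`: they satisfy an LDP
with rate function `I_1(p) = h* - h(p)`, where `h* = sup_{p ∈ M} h(p)`. -/
theorem multinomial_measures_LDP (D : ℕ) (hD : 2 ≤ D) :
    HasLDP (fun N => muN D N)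
      (fun p : MSet D => sSup (entropy D '' MSet D) - entropy D p) := by
  have hcont : Continuous fun p : MSet D => entropy D p :=
    (continuous_entropy D).comp continuous_subtype_val
  exact ⟨(continuous_const.sub hcont).lowerSemicontinuous,
    fun p => sub_nonneg.mpr (entropy_le_sSup p.2),
    fun _ hC => limsup_log_muN_le hD hC, fun _ hO => le_liminf_log_muN hD hO⟩
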